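/- arXiv:2304.07529 — 2 statements merged into one kernel-verified Lean document; each statement's English description precedes it below -/
import Mathlib

section
/- Let G be a finite abelian group, M a duality on G, and M^T the transpose duality defined by χ'_x(y) = χ_y(x). An additive code C ≤ G^n satisfies C ∩ C^M = {0} if and only if C ∩ C^{M^T} = {0}. -/
/-- A duality `M` on a finite abelian group `G`: an isomorphism `x ↦ χ_x`
from `G` onto its character group `Hom(G, ℂ*)`. -/
structure Duality (G : Type*) [AddCommGroup G] where
  χ : G → G → ℂˣ
  add_left : ∀ x y z : G, χ (x + y) z = χ x z * χ y z
  add_right : ∀ x y z : G, χ x (y + z) = χ x y * χ x z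
  bij : ∀ ψ : G → ℂˣ, (∀ y z : G, ψ (y + z) = ψ y * ψ z) → ∃! x : G, χ x = ψ

namespace Duality

variable {G : Type*} [AddCommGroup G]

lemma zero_left (M : Duality G) (z : G) : M.χ 0 z = 1 := by
  have h := M.add_left 0 0 z
  rw [add_zero] at h
  exact mul_left_cancel (h.symm.trans (mul_one _).symm)

lemma zero_right (M : Duality G) (z : G) : M.χ z 0 = 1 := by
  have h := M.add_right z 0 0
  rw [add_zero] at h
  exact mul_left_cancel (h.symm.trans (mul_one _).symm)

lemma neg_left (M : Duality G) (x z : G) : M.χ (-x) z = (M.χ x z)⁻¹ := by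
  have h := M.add_left x (-x) z
  rw [add_neg_cancel, M.zero_left] at h
  exact (inv_eq_of_mul_eq_one_right h.symm).symm

lemma neg_right (M : Duality G) (x z : G) : M.χ z (-x) = (M.χ z x)⁻¹ := by
  have h := M.add_right z x (-x)
  rw [add_neg_cancel, M.zero_right] at h
  exact (inv_eq_of_mul_eq_one_right h.symm).symm

/-- The `M`-dual of an additive code `C ≤ G^n`:
`C^M = {x : ∏ i, χ_{x i}(c i) = 1 for all c ∈ C}`. -/
def dualCode {n : ℕ} (M : Duality G) (C : AddSubgroup (Fin n → G)) :
    AddSubgroup (Fin n → G) where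
  carrier := {x | ∀ c ∈ C, ∏ i, M.χ (x i) (c i) = 1}
  zero_mem' := by
    intro c _
    simp [Duality.zero_left]
  add_mem' := by
    intro a b ha hb c hc
    have h : ∏ i, M.χ ((a + b) i) (c i)
        = (∏ i, M.χ (a i) (c i)) * ∏ i, M.χ (b i) (c i) := by
      rw [← Finset.prod_mul_distrib]
      exact Finset.prod_congr rfl fun i _ => M.add_left (a i) (b i) (c i)
    rw [h, ha c hc, hb c hc, mul_one]
  neg_mem' := by
    intro a ha c hc
    have h : ∏ i, M.χ ((-a) i) (c i) = (∏ i, M.χ (a i) (c i))⁻¹ := by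
      rw [← Finset.prod_inv_distrib]
      exact Finset.prod_congr rfl fun i _ => M.neg_left (a i) (c i)
    rw [h, ha c hc, inv_one]

/-- The `Mᵀ`-dual of an additive code `C ≤ G^n`, for the transpose duality
`χ'_x(y) = χ_y(x)`: `C^{Mᵀ} = {x : ∏ i, χ_{c i}(x i) = 1 for all c ∈ C}`. -/
def dualTCode {n : ℕ} (M : Duality G) (C : AddSubgroup (Fin n → G)) :
    AddSubgroup (Fin n → G) where
  carrier := {x | ∀ c ∈ C, ∏ i, M.χ (c i) (x i) = 1}
  zero_mem' := by
    intro c _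
    simp [Duality.zero_right]
  add_mem' := by
    intro a b ha hb d hd
    have h : ∏ i, M.χ (d i) ((a + b) i)
        = (∏ i, M.χ (d i) (a i)) * ∏ i, M.χ (d i) (b i) := by
      rw [← Finset.prod_mul_distrib]
      exact Finset.prod_congr rfl fun i _ => M.add_right (d i) (a i) (b i)
    rw [h, ha d hd, hb d hd, mul_one]
  neg_mem' := by
    intro a ha d hd
    have h : ∏ i, M.χ (d i) ((-a) i) = (∏ i, M.χ (d i) (a i))⁻¹ := by
      rw [← Finset.prod_inv_distrib]
      exact Finset.prod_congr rfl fun i _ => M.neg_right (a i) (d i)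
    rw [h, ha d hd, inv_one]

/-- The `M`-dual of a length-one additive code `C ≤ G`. -/
def dualOne (M : Duality G) (C : AddSubgroup G) : AddSubgroup G where
  carrier := {y | ∀ c ∈ C, M.χ y c = 1}
  zero_mem' := by intro c _; exact M.zero_left c
  add_mem' := by
    intro a b ha hb c hc
    rw [M.add_left a b c, ha c hc, hb c hc, mul_one]
  neg_mem' := by
    intro a ha c hc
    rw [M.neg_left a c, ha c hc, inv_one]

/-- The character `χ` extended coordinatewise to vectors:
`χ_u(v) = ∏ i, χ_{u i}(v i)`. -/
def chiVec {n : ℕ} (M : Duality G) (u v : Fin n → G) : ℂˣ :=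
  ∏ i, M.χ (u i) (v i)

end Duality

/-!
A finite abelian group `A` has exactly as many complex characters as elements, and characters
separate its points. Hence a bimultiplicative pairing `B : A × A → ℂˣ` with trivial left kernel
identifies `A` with its character group; then every character of `A` is some `B c`, and an element
killed by all `B c` is `0`, i.e. the right kernel is trivial too. Applied to the pairing
`χ_u(v) = ∏ i, χ_{u i}(v i)` restricted to `C`, the left kernel is `C ∩ C^M` and the right kernel
is `C ∩ C^{Mᵀ}`.
-/

open Function

namespace AddChar

section Flip

variable {A A' M : Type*} [AddCommMonoid A] [AddCommMonoid A'] [CommMonoid M]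

def flip (B : AddChar A (AddChar A' M)) : AddChar A' (AddChar A M) where
  toFun b :=
    { toFun a := B a b
      map_zero_eq_one' := by rw [map_zero_eq_one, one_apply]
      map_add_eq_mul' a a' := by rw [map_add_eq_mul, mul_apply] }
  map_zero_eq_one' := by ext a; exact map_zero_eq_one (B a)
  map_add_eq_mul' b b' := by ext a; exact map_add_eq_mul (B a) b b'

end Flip

section Finite

variable {A : Type*} [AddCommGroup A] [Finite A]

lemma injective_flip_of_injective {B : AddChar A (AddChar A ℂ)} (hB : Injective B) :
    Injective B.flip := by
  have := Fintype.ofFinite A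
  have hB_bij : Bijective B :=
    (Fintype.bijective_iff_injective_and_card B).2 ⟨hB, card_eq.symm⟩
  refine injective_iff.2 fun a ha => forall_apply_eq_zero.1 fun ψ => ?_
  obtain ⟨c, rfl⟩ := hB_bij.2 ψ
  exact DFunLike.congr_fun ha c

lemma injective_flip_iff {B : AddChar A (AddChar A ℂ)} : Injective B.flip ↔ Injective B :=
  ⟨injective_flip_of_injective, injective_flip_of_injective⟩

end Finite

end AddChar

namespace Duality

variable {G : Type*} [AddCommGroup G] {n : ℕ} (M : Duality G)

lemma chiVec_zero_left (v : Fin n → G) : M.chiVec 0 v = 1 := by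
  simp [chiVec, zero_left]

lemma chiVec_zero_right (u : Fin n → G) : M.chiVec u 0 = 1 := by
  simp [chiVec, zero_right]

lemma chiVec_add_left (u u' v : Fin n → G) :
    M.chiVec (u + u') v = M.chiVec u v * M.chiVec u' v := by
  simp only [chiVec, Pi.add_apply, add_left, Finset.prod_mul_distrib]

lemma chiVec_add_right (u v v' : Fin n → G) :
    M.chiVec u (v + v') = M.chiVec u v * M.chiVec u v' := by
  simp only [chiVec, Pi.add_apply, add_right, Finset.prod_mul_distrib]

variable (C : AddSubgroup (Fin n → G))

def codePairing : AddChar C (AddChar C ℂ) where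
  toFun a :=
    { toFun c := (M.chiVec (a : Fin n → G) (c : Fin n → G) : ℂ)
      map_zero_eq_one' := by simp [chiVec_zero_right]
      map_add_eq_mul' c c' := by simp [chiVec_add_right] }
  map_zero_eq_one' := by ext c; simp [chiVec_zero_left]
  map_add_eq_mul' a a' := by ext c; simp [chiVec_add_left]

lemma codePairing_eq_one_iff (a : C) :
    M.codePairing C a = 1 ↔ (a : Fin n → G) ∈ M.dualCode C := by
  rw [DFunLike.ext_iff]
  exact ⟨fun h c hc => Units.val_eq_one.1 (h ⟨c, hc⟩), fun h c => Units.val_eq_one.2 (h c c.2)⟩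

lemma codePairing_flip_eq_one_iff (a : C) :
    (M.codePairing C).flip a = 1 ↔ (a : Fin n → G) ∈ M.dualTCode C := by
  rw [DFunLike.ext_iff]
  exact ⟨fun h c hc => Units.val_eq_one.1 (h ⟨c, hc⟩), fun h c => Units.val_eq_one.2 (h c c.2)⟩

lemma injective_codePairing_iff : Injective (M.codePairing C) ↔ C ⊓ M.dualCode C = ⊥ := by
  simp only [AddChar.injective_iff, codePairing_eq_one_iff, AddSubgroup.eq_bot_iff_forall,
    AddSubgroup.mem_inf, Subtype.forall, and_imp, AddSubgroup.mk_eq_zero]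

lemma injective_codePairing_flip_iff :
    Injective (M.codePairing C).flip ↔ C ⊓ M.dualTCode C = ⊥ := by
  simp only [AddChar.injective_iff, codePairing_flip_eq_one_iff, AddSubgroup.eq_bot_iff_forall,
    AddSubgroup.mem_inf, Subtype.forall, and_imp, AddSubgroup.mk_eq_zero]

end Duality

/-- `C ∩ C^M = {0}` iff `C ∩ C^{Mᵀ} = {0}`, where `Mᵀ` is the
transpose duality `χ'_x(y) = χ_y(x)`. -/
theorem acd_iff_acd_transpose {G : Type*} [AddCommGroup G] [Fintype G]
    (M : Duality G) {n : ℕ} (C : AddSubgroup (Fin n → G)) :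
    C ⊓ M.dualCode C = ⊥ ↔ C ⊓ M.dualTCode C = ⊥ := by
  rw [← M.injective_codePairing_iff, ← M.injective_codePairing_flip_iff]
  exact AddChar.injective_flip_iff.symm
end

section
/- For every prime p, the number of invertible symmetric e×e matrices over F_p equals p^{k(k-1)}(p-1)(p^3-1)···(p^{2k-1}-1) when e = 2k-1, and p^{k(k+1)}(p-1)(p^3-1)···(p^{2k-1}-1) when e = 2k. -/
/-!
Write a symmetric matrix over `F_q` indexed by `Unit ⊕ ι` as `[[a, bᵀ], [b, C]]` and let `N(n)`
count the invertible symmetric `n × n` matrices. If `a ≠ 0`, the Schur complement shows the matrix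
is invertible iff `C - a⁻¹ b bᵀ` is, so each such `(a, b)` contributes `N(n)`. If `a = 0` then
`b ≠ 0`, and a congruence by `diag(1, g)` moves `b` to the first basis vector; there invertibility
only depends on the lower right `(n - 1) × (n - 1)` block of `C`, so each `b` contributes
`q^n N(n - 1)`. Hence `N(n + 1) = (q - 1) q^n N(n) + (q^n - 1) q^n N(n - 1)`, and the product
formula follows by induction on `n`.
-/

namespace Matrix

variable {α R K : Type*} {ι κ : Type*}

def bordered (a : α) (b : ι → α) (C : Matrix ι ι α) : Matrix (Unit ⊕ ι) (Unit ⊕ ι) α :=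
  fromBlocks (of fun _ _ => a) (replicateRow Unit b) (replicateCol Unit b) C

@[simp]
lemma isSymm_bordered_iff {a : α} {b : ι → α} {C : Matrix ι ι α} :
    (bordered a b C).IsSymm ↔ C.IsSymm := by
  simp only [IsSymm, bordered, fromBlocks_transpose, transpose_replicateRow,
    transpose_replicateCol, fromBlocks_inj]
  exact ⟨fun h => h.2.2.2, fun h => ⟨rfl, trivial, trivial, h⟩⟩

lemma IsSymm.eq_bordered {A : Matrix (Unit ⊕ ι) (Unit ⊕ ι) α} (hA : A.IsSymm) :
    A = bordered (A (.inl ()) (.inl ())) (fun i => A (.inl ()) (.inr i)) A.toBlocks₂₂ := by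
  ext (_ | i) (_ | j)
  · rfl
  · rfl
  · exact hA.apply _ _
  · rfl

def isSymmBorderedEquiv (P : Matrix (Unit ⊕ ι) (Unit ⊕ ι) α → Prop) :
    {A // A.IsSymm ∧ P A} ≃
      Σ x : α × (ι → α), {C : Matrix ι ι α // C.IsSymm ∧ P (bordered x.1 x.2 C)} where
  toFun A := ⟨(A.1 (.inl ()) (.inl ()), fun i => A.1 (.inl ()) (.inr i)), A.1.toBlocks₂₂,
    isSymm_bordered_iff.1 (A.2.1.eq_bordered ▸ A.2.1), A.2.1.eq_bordered ▸ A.2.2⟩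
  invFun x := ⟨bordered x.1.1 x.1.2 x.2.1, isSymm_bordered_iff.2 x.2.2.1, x.2.2.2⟩
  left_inv A := Subtype.ext A.2.1.eq_bordered.symm
  right_inv _ := rfl

lemma card_isSymm_and_eq_sum [Fintype α] [Fintype ι] [DecidableEq ι]
    (P : Matrix (Unit ⊕ ι) (Unit ⊕ ι) α → Prop) :
    Nat.card {A // A.IsSymm ∧ P A} =
      ∑ x : α × (ι → α), Nat.card {C : Matrix ι ι α // C.IsSymm ∧ P (bordered x.1 x.2 C)} := by
  rw [Nat.card_congr (isSymmBorderedEquiv P), Nat.card_sigma]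

section CommRing

variable [CommRing R] [Fintype ι]

lemma det_bordered_zero_zero [DecidableEq ι] (C : Matrix ι ι R) : (bordered 0 0 C).det = 0 :=
  det_eq_zero_of_row_eq_zero (.inl ()) (by rintro (_ | _) <;> rfl)

lemma bordered_mulVec_mul_mul_transpose (g : Matrix ι ι R) (a : R) (b : ι → R)
    (C : Matrix ι ι R) :
    bordered a (g *ᵥ b) (g * C * gᵀ) =
      fromBlocks 1 0 0 g * bordered a b C * (fromBlocks 1 0 0 g)ᵀ := by
  simp only [bordered, fromBlocks_transpose, fromBlocks_multiply, Matrix.mul_zero, Matrix.zero_mul,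
    Matrix.one_mul, Matrix.mul_one, add_zero, zero_add, transpose_zero, transpose_one]
  rw [← replicateCol_mulVec, ← vecMul_transpose, ← replicateRow_vecMul]

lemma det_bordered_zero_single [Fintype κ] [DecidableEq κ] (c : R) (d : κ → R)
    (E : Matrix κ κ R) :
    (bordered 0 (Pi.single (.inl ()) 1) (bordered c d E)).det = -E.det := by
  -- swapping the first two columns makes the matrix block triangular, twice over
  set σ : Equiv.Perm (Unit ⊕ (Unit ⊕ κ)) := Equiv.swap (.inl ()) (.inr (.inl ()))
  have hσ : (bordered 0 (Pi.single (.inl ()) 1) (bordered c d E)).submatrix id σ =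
      fromBlocks 1 0 (replicateCol Unit (Sum.elim (fun _ => c) d))
        (fromBlocks 1 (replicateRow Unit d) 0 E) := by
    ext (_ | _ | i) (_ | _ | j) <;> simp [σ, bordered, Equiv.swap_apply_def]
  have h := det_permute' σ (bordered 0 (Pi.single (.inl ()) 1) (bordered c d E))
  rw [hσ, det_fromBlocks_zero₁₂, det_fromBlocks_zero₂₁, det_one, one_mul, one_mul,
    Equiv.Perm.sign_swap (by simp)] at h
  rw [h]
  simp

end CommRing

section Field

variable [Field K] [Fintype ι] [DecidableEq ι]

lemma det_bordered_of_ne_zero {a : K} (ha : a ≠ 0) (b : ι → K) (C : Matrix ι ι K) :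
    (bordered a b C).det = a * (C - a⁻¹ • vecMulVec b b).det := by
  let _ : Invertible (of fun _ _ => a : Matrix Unit Unit K) :=
    ⟨of fun _ _ => a⁻¹, by ext; simp [Matrix.mul_apply, ha], by ext; simp [Matrix.mul_apply, ha]⟩
  have hschur : replicateCol Unit b * ⅟(of fun _ _ => a : Matrix Unit Unit K) * replicateRow Unit b
      = a⁻¹ • vecMulVec b b := by
    ext i j
    simp [Matrix.mul_apply, vecMulVec, mul_comm, mul_left_comm, mul_assoc]
  rw [bordered, det_fromBlocks₁₁, hschur, det_unique]
  rfl

lemma card_bordered_of_ne_zero {a : K} (ha : a ≠ 0) (b : ι → K) :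
    Nat.card {C : Matrix ι ι K // C.IsSymm ∧ IsUnit (bordered a b C).det} =
      Nat.card {C : Matrix ι ι K // C.IsSymm ∧ IsUnit C.det} := by
  have hsymm : (a⁻¹ • vecMulVec b b).IsSymm := by
    rw [IsSymm, transpose_smul, transpose_vecMulVec]
  refine Nat.card_congr (Equiv.subtypeEquiv (Equiv.subRight (a⁻¹ • vecMulVec b b)) fun C => ?_)
  rw [det_bordered_of_ne_zero ha, IsUnit.mul_iff, Equiv.subRight_apply]
  refine and_congr ⟨fun hC => hC.sub hsymm, fun hC => by simpa using hC.add hsymm⟩ ?_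
  simp [ha]

lemma card_bordered_mulVec {g : Matrix ι ι K} (hg : IsUnit g.det) (a : K) (b : ι → K) :
    Nat.card {C : Matrix ι ι K // C.IsSymm ∧ IsUnit (bordered a (g *ᵥ b) C).det} =
      Nat.card {C : Matrix ι ι K // C.IsSymm ∧ IsUnit (bordered a b C).det} := by
  let congr : Matrix ι ι K ≃ Matrix ι ι K :=
    (Units.mulLeft (nonsingInvUnit g hg)).trans
      (Units.mulRight (nonsingInvUnit gᵀ (by rwa [det_transpose])))
  have hcongr (C : Matrix ι ι K) : congr C = g * C * gᵀ := rfl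
  refine (Nat.card_congr (Equiv.subtypeEquiv congr fun C => ?_)).symm
  have hsymm : (congr C)ᵀ = congr Cᵀ := by
    simp [hcongr, transpose_mul, Matrix.mul_assoc]
  rw [hcongr, bordered_mulVec_mul_mul_transpose, det_mul, det_mul, det_transpose,
    det_fromBlocks_zero₂₁, det_one, one_mul, IsSymm, IsSymm, ← hcongr, hsymm,
    congr.injective.eq_iff]
  simp [hg.ne_zero]

lemma exists_isUnit_det_mulVec_eq {v w : ι → K} (hv : v ≠ 0) (hw : w ≠ 0) :
    ∃ g : Matrix ι ι K, IsUnit g.det ∧ g *ᵥ v = w := by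
  obtain ⟨g, hg⟩ := Submodule.exists_linearEquiv_restrict_eq
    ((LinearEquiv.toSpanNonzeroSingleton K _ v hv).symm.trans
      (LinearEquiv.toSpanNonzeroSingleton K _ w hw))
  refine ⟨LinearMap.toMatrix' g, by simpa using g.isUnit_det', ?_⟩
  have hv1 : (LinearEquiv.toSpanNonzeroSingleton K _ v hv).symm
      ⟨v, Submodule.mem_span_singleton_self v⟩ = 1 := by
    rw [LinearEquiv.symm_apply_eq, LinearEquiv.toSpanNonzeroSingleton_one]
  simpa [hv1] using (hg ⟨v, Submodule.mem_span_singleton_self v⟩).symm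

lemma card_bordered_zero_of_ne_zero [Fintype K] [Fintype κ] [DecidableEq κ] {b : Unit ⊕ κ → K}
    (hb : b ≠ 0) :
    Nat.card {C : Matrix (Unit ⊕ κ) (Unit ⊕ κ) K // C.IsSymm ∧ IsUnit (bordered 0 b C).det} =
      Fintype.card K ^ (1 + Fintype.card κ) *
        Nat.card {E : Matrix κ κ K // E.IsSymm ∧ IsUnit E.det} := by
  obtain ⟨g, hg, rfl⟩ := exists_isUnit_det_mulVec_eq (v := Pi.single (.inl ()) 1)
    (Pi.single_ne_zero_iff.2 one_ne_zero) hb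
  simp only [card_bordered_mulVec hg, card_isSymm_and_eq_sum, det_bordered_zero_single,
    IsUnit.neg_iff, Finset.sum_const, Finset.card_univ, Fintype.card_prod, Fintype.card_fun,
    smul_eq_mul, pow_add, pow_one]

lemma card_isSymm_isUnit_unit_sum [Fintype K] {c : ℕ}
    (hc : ∀ b : ι → K, b ≠ 0 →
      Nat.card {C : Matrix ι ι K // C.IsSymm ∧ IsUnit (bordered 0 b C).det} = c) :
    Nat.card {A : Matrix (Unit ⊕ ι) (Unit ⊕ ι) K // A.IsSymm ∧ IsUnit A.det} =
      (Fintype.card K - 1) * Fintype.card K ^ Fintype.card ι *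
          Nat.card {C : Matrix ι ι K // C.IsSymm ∧ IsUnit C.det} +
        (Fintype.card K ^ Fintype.card ι - 1) * c := by
  classical
  have hzero : Nat.card {C : Matrix ι ι K // C.IsSymm ∧ IsUnit (bordered 0 0 C).det} = 0 := by
    simp [det_bordered_zero_zero]
  rw [card_isSymm_and_eq_sum, Fintype.sum_prod_type, Fintype.sum_eq_add_sum_compl 0,
    Fintype.sum_eq_add_sum_compl 0, hzero, zero_add,
    Finset.sum_congr rfl fun b hb => hc b (by simpa using hb),
    Finset.sum_congr rfl fun a ha =>
      Finset.sum_congr rfl fun b _ => card_bordered_of_ne_zero (by simpa using ha) b]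
  simp only [Finset.sum_const, Finset.card_compl, Fintype.card_pi, Finset.prod_const,
    Finset.card_univ, Finset.card_singleton, smul_eq_mul, isUnit_iff_ne_zero,
    Nat.card_eq_fintype_card]
  ring

end Field

end Matrix

open Finset in
theorem eq_prod_of_symm_recurrence {q : ℕ} (hq : 1 ≤ q) {N : ℕ → ℕ} (h0 : N 0 = 1)
    (h1 : N 1 = q - 1)
    (hrec : ∀ n, N (n + 2) =
      (q - 1) * q ^ (n + 1) * N (n + 1) + (q ^ (n + 1) - 1) * (q ^ (n + 1) * N n))
    (k : ℕ) :
    N (2 * k) = q ^ (k * (k + 1)) * ∏ i ∈ range k, (q ^ (2 * i + 1) - 1) ∧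
      N (2 * k + 1) = q ^ ((k + 1) * k) * ∏ i ∈ range (k + 1), (q ^ (2 * i + 1) - 1) := by
  have hpow (j : ℕ) : ((q ^ j - 1 : ℕ) : ℤ) = (q : ℤ) ^ j - 1 := by
    simp [Nat.cast_sub (Nat.one_le_pow _ _ hq)]
  induction k with
  | zero => simp [h0, h1]
  | succ k ih =>
    obtain ⟨heven, hodd⟩ := ih
    have heven' : N (2 * (k + 1)) =
        q ^ ((k + 1) * (k + 1 + 1)) * ∏ i ∈ range (k + 1), (q ^ (2 * i + 1) - 1) := by
      rw [show 2 * (k + 1) = 2 * k + 2 by ring, hrec, hodd, heven, prod_range_succ]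
      generalize ∏ i ∈ range k, (q ^ (2 * i + 1) - 1) = P
      zify [hq]
      simp only [hpow]
      ring
    refine ⟨heven', ?_⟩
    rw [show 2 * (k + 1) + 1 = 2 * k + 1 + 2 by ring, hrec,
      show 2 * k + 1 + 1 = 2 * (k + 1) by ring, heven', hodd]
    simp only [prod_range_succ]
    generalize ∏ i ∈ range k, (q ^ (2 * i + 1) - 1) = P
    zify [hq]
    simp only [hpow]
    ring

open Matrix

noncomputable def invSymmCount (R : Type*) [CommRing R] (n : ℕ) : ℕ :=
  Nat.card {A : Matrix (Fin n) (Fin n) R // A.IsSymm ∧ IsUnit A.det}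

lemma card_isSymm_isUnit_eq_invSymmCount {R : Type*} [CommRing R] (ι : Type*) [Fintype ι]
    [DecidableEq ι] :
    Nat.card {A : Matrix ι ι R // A.IsSymm ∧ IsUnit A.det} = invSymmCount R (Fintype.card ι) := by
  let e := Fintype.equivFin ι
  refine Nat.card_congr (Equiv.subtypeEquiv (reindex e e) fun A => ?_)
  rw [IsSymm, IsSymm, transpose_reindex, det_reindex_self, Equiv.apply_eq_iff_eq]

lemma invSymmCount_zero (R : Type*) [CommRing R] : invSymmCount R 0 = 1 := by
  rw [invSymmCount, Nat.card_eq_one_iff_unique]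
  exact ⟨inferInstance, ⟨⟨1, isSymm_one, by simp⟩⟩⟩

section FiniteField

variable (K : Type*) [Field K] [Fintype K]

lemma invSymmCount_one : invSymmCount K 1 = Fintype.card K - 1 := by
  have hstep := card_isSymm_isUnit_unit_sum (K := K) (ι := Fin 0) (c := 0)
    (fun b hb => (hb (Subsingleton.elim b 0)).elim)
  simp only [card_isSymm_isUnit_eq_invSymmCount, Fintype.card_sum, Fintype.card_unit,
    Fintype.card_fin, invSymmCount_zero] at hstep
  simpa using hstep

lemma invSymmCount_add_two (n : ℕ) :
    invSymmCount K (n + 2) =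
      (Fintype.card K - 1) * Fintype.card K ^ (n + 1) * invSymmCount K (n + 1) +
        (Fintype.card K ^ (n + 1) - 1) * (Fintype.card K ^ (n + 1) * invSymmCount K n) := by
  have hstep := card_isSymm_isUnit_unit_sum (K := K) (ι := Unit ⊕ Fin n)
    (fun b hb => card_bordered_zero_of_ne_zero hb)
  simp only [card_isSymm_isUnit_eq_invSymmCount, Fintype.card_sum, Fintype.card_unit,
    Fintype.card_fin] at hstep
  rwa [show 1 + (1 + n) = n + 2 by ring, add_comm 1 n] at hstep

lemma invSymmCount_two_mul (k : ℕ) :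
    invSymmCount K (2 * k) = Fintype.card K ^ (k * (k + 1)) *
      ∏ i ∈ Finset.range k, (Fintype.card K ^ (2 * i + 1) - 1) :=
  (eq_prod_of_symm_recurrence Fintype.card_pos (invSymmCount_zero K) (invSymmCount_one K)
    (invSymmCount_add_two K) k).1

lemma invSymmCount_two_mul_add_one (k : ℕ) :
    invSymmCount K (2 * k + 1) = Fintype.card K ^ ((k + 1) * k) *
      ∏ i ∈ Finset.range (k + 1), (Fintype.card K ^ (2 * i + 1) - 1) :=
  (eq_prod_of_symm_recurrence Fintype.card_pos (invSymmCount_zero K) (invSymmCount_one K)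
    (invSymmCount_add_two K) k).2

end FiniteField

/-- The number of invertible symmetric `e × e` matrices over `F_p`
is `p^{k(k-1)}(p-1)(p^3-1)⋯(p^{2k-1}-1)` when `e = 2k-1`, and
`p^{k(k+1)}(p-1)(p^3-1)⋯(p^{2k-1}-1)` when `e = 2k`. -/
theorem card_invertible_symmetric_matrices (p k : ℕ) (hp : p.Prime) (hk : 1 ≤ k) :
    Nat.card {A : Matrix (Fin (2 * k - 1)) (Fin (2 * k - 1)) (ZMod p) //
        A.IsSymm ∧ IsUnit A.det}
      = p ^ (k * (k - 1)) * ∏ i ∈ Finset.range k, (p ^ (2 * i + 1) - 1) ∧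
    Nat.card {A : Matrix (Fin (2 * k)) (Fin (2 * k)) (ZMod p) //
        A.IsSymm ∧ IsUnit A.det}
      = p ^ (k * (k + 1)) * ∏ i ∈ Finset.range k, (p ^ (2 * i + 1) - 1) := by
  have : Fact p.Prime := ⟨hp⟩
  obtain ⟨j, rfl⟩ := Nat.exists_eq_add_of_le' hk
  rw [show 2 * (j + 1) - 1 = 2 * j + 1 by omega, Nat.add_sub_cancel]
  have hodd := invSymmCount_two_mul_add_one (ZMod p) j
  have heven := invSymmCount_two_mul (ZMod p) (j + 1)
  rw [ZMod.card] at hodd heven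
  exact ⟨hodd, heven⟩
end
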